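/- arXiv:1405.6370 — 2 statements merged into one kernel-verified Lean document; each statement's English description precedes it below -/
import Mathlib

section
/- (Duality theorem) If (X_i) are i.i.d. ℝ²-valued random variables, R_{t_n} = u + ∑_{i=1}^n X_i, and W_n is the reflected walk with W_0 = 0 and W_{n+1} = (W_n - X_{n+1}) ⊔ 0, then P(R_{t_i} ⪰ 0 for all i = 1,...,n | R_0 = u) = P(W_n ⪯ u). -/
/-!
Unrolling the recursion, `W n ⪯ u` holds exactly when `u + X n + X (n - 1) + ⋯ + X (n - k + 1) ⪰ 0`
for every `k ≤ n`, i.e. when the risk process driven by the increments taken in reverse order stays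
nonnegative up to time `n`. Independent, identically distributed increments are exchangeable, so
`(X 1, …, X n)` and `(X n, …, X 1)` have the same joint law, and the two events have the same
probability.
-/

open MeasureTheory ProbabilityTheory Finset

theorem ProbabilityTheory.iIndepFun.map_comp_eq_map_comp_of_identDistrib
    {Ω ι κ β : Type*} [MeasurableSpace Ω] [MeasurableSpace β] [Fintype κ] {μ : Measure Ω}
    {X : ι → Ω → β} (hindep : iIndepFun X μ) (hident : ∀ i j, IdentDistrib (X i) (X j) μ μ)
    {g h : κ → ι} (hg : g.Injective) (hh : h.Injective) :
    μ.map (fun ω k ↦ X (g k) ω) = μ.map (fun ω k ↦ X (h k) ω) := by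
  rw [(hindep.precomp hg).map_fun_eq_pi_map fun k ↦ (hident (g k) (g k)).aemeasurable_fst,
    (hindep.precomp hh).map_fun_eq_pi_map fun k ↦ (hident (h k) (h k)).aemeasurable_fst]
  exact congrArg Measure.pi (funext fun k ↦ (hident _ _).map_eq)

theorem reflected_le_iff_forall_nonneg {α : Type*} [AddCommGroup α] [Lattice α]
    [IsOrderedAddMonoid α] {w x : ℕ → α} (hw0 : w 0 = 0)
    (hw : ∀ n, w (n + 1) = (w n - x (n + 1)) ⊔ 0) (n : ℕ) (u : α) :
    w n ≤ u ↔ ∀ k < n + 1, 0 ≤ u + ∑ j ∈ range k, x (n - j) := by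
  induction n generalizing u with
  | zero => simp [hw0]
  | succ n ih =>
    rw [hw, sup_le_iff, sub_le_iff_le_add, ih, Nat.forall_lt_succ_left (n := n + 1), and_comm]
    simp only [sum_range_succ', Nat.add_sub_add_right, sum_range_zero, add_zero, Nat.sub_zero,
      ← add_assoc, add_right_comm u]

section PartialSums

variable {α : Type*} [AddCommMonoid α] [Preorder α]

def partialSumsNonneg (u : α) (n : ℕ) : Set (Fin n → α) :=
  {v | ∀ k : Fin (n + 1), 0 ≤ u + ∑ j : Fin k, v (Fin.castLE k.is_le j)}

theorem mem_partialSumsNonneg_iff (x : ℕ → α) (u : α) (n : ℕ) :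
    (fun j : Fin n ↦ x j) ∈ partialSumsNonneg u n ↔ ∀ k < n + 1, 0 ≤ u + ∑ j ∈ range k, x j := by
  simp [partialSumsNonneg, Fin.forall_iff, Fin.sum_univ_eq_sum_range]

theorem isClosed_partialSumsNonneg [TopologicalSpace α] [ContinuousAdd α] [OrderClosedTopology α]
    (u : α) (n : ℕ) : IsClosed (partialSumsNonneg u n) := by
  simp only [partialSumsNonneg, Set.ofPred_forall]
  exact isClosed_iInter fun _ ↦ isClosed_le continuous_const (by fun_prop)

end PartialSums

theorem stmt_7_general {Ω : Type*} [MeasurableSpace Ω] (μ : Measure Ω)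
    (X : ℕ → Ω → ℝ × ℝ)
    (hindep : iIndepFun X μ)
    (hident : ∀ i j, IdentDistrib (X i) (X j) μ μ)
    (u : ℝ × ℝ) (hu : 0 ≤ u)
    (R : ℕ → Ω → ℝ × ℝ) (hR : ∀ k ω, R k ω = u + ∑ i ∈ Finset.range k, X (i + 1) ω)
    (W : ℕ → Ω → ℝ × ℝ) (hW0 : ∀ ω, W 0 ω = 0)
    (hWrec : ∀ n ω, W (n + 1) ω = (W n ω - X (n + 1) ω) ⊔ 0)
    (n : ℕ) :
    μ {ω | ∀ i, 1 ≤ i → i ≤ n → 0 ≤ R i ω} = μ {ω | W n ω ≤ u} := by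
  have hR_event : {ω | ∀ i, 1 ≤ i → i ≤ n → 0 ≤ R i ω} =
      (fun ω (j : Fin n) ↦ X (j + 1) ω) ⁻¹' partialSumsNonneg u n := by
    ext ω
    rw [Set.mem_preimage, mem_partialSumsNonneg_iff (fun m ↦ X (m + 1) ω)]
    simp only [Set.mem_ofPred_eq, hR]
    constructor
    · intro h k hk
      rcases Nat.eq_zero_or_pos k with rfl | hk0
      · simpa using hu
      · exact h k hk0 (by omega)
    · exact fun h i _ hi ↦ h i (by omega)
  have hW_event : {ω | W n ω ≤ u} =
      (fun ω (j : Fin n) ↦ X (n - j) ω) ⁻¹' partialSumsNonneg u n := by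
    ext ω
    rw [Set.mem_preimage, mem_partialSumsNonneg_iff (fun m ↦ X (n - m) ω)]
    exact reflected_le_iff_forall_nonneg (w := fun m ↦ W m ω) (x := fun m ↦ X m ω) (hW0 ω)
      (fun m ↦ hWrec m ω) n u
  have hlaw := hindep.map_comp_eq_map_comp_of_identDistrib hident
    (g := fun j : Fin n ↦ (j : ℕ) + 1) (h := fun j : Fin n ↦ n - j)
    (fun a b hab ↦ Fin.ext (by simpa using hab))
    (fun a b hab ↦ Fin.ext (by have := a.2; have := b.2; simp only at hab; omega))
  have haemeas : ∀ g : Fin n → ℕ, AEMeasurable (fun ω j ↦ X (g j) ω) μ :=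
    fun g ↦ aemeasurable_pi_lambda _ fun j ↦ (hident (g j) (g j)).aemeasurable_fst
  have hS := (isClosed_partialSumsNonneg u n).measurableSet
  rw [hR_event, hW_event, ← Measure.map_apply_of_aemeasurable (haemeas _) hS,
    ← Measure.map_apply_of_aemeasurable (haemeas _) hS, hlaw]

/-- (Duality) If `(X_i)` are i.i.d. `ℝ²`-valued random variables,
`R_{t_n} = u + ∑_{i=1}^n X_i`, and `W_n` is the reflected walk with `W_0 = 0`,
`W_{n+1} = (W_n - X_{n+1}) ⊔ 0`, then
`P(R_{t_i} ⪰ 0, i = 1,…,n | R_0 = u) = P(W_n ⪯ u)` (componentwise order). -/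
theorem stmt_7 {Ω : Type*} [MeasurableSpace Ω] (μ : Measure Ω) [IsProbabilityMeasure μ]
    (X : ℕ → Ω → ℝ × ℝ) (hmeas : ∀ i, Measurable (X i))
    (hindep : iIndepFun X μ)
    (hident : ∀ i j, IdentDistrib (X i) (X j) μ μ)
    (u : ℝ × ℝ) (hu : 0 ≤ u)
    (R : ℕ → Ω → ℝ × ℝ) (hR : ∀ k ω, R k ω = u + ∑ i ∈ Finset.range k, X (i + 1) ω)
    (W : ℕ → Ω → ℝ × ℝ) (hW0 : ∀ ω, W 0 ω = 0)
    (hWrec : ∀ n ω, W (n + 1) ω = (W n ω - X (n + 1) ω) ⊔ 0)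
    (n : ℕ) :
    μ {ω | ∀ i, 1 ≤ i → i ≤ n → 0 ≤ R i ω} = μ {ω | W n ω ≤ u} :=
  stmt_7_general μ X hindep hident u hu R hR W hW0 hWrec n
end

section
/- Let W and X be independent ℝ²-valued random variables and W' = (W − X) ⊔ 0 componentwise. Then for s₁, s₂ with Re s₁ = Re s₂ = 0, E[e^{−s₁ W'^{(1)} − s₂ W'^{(2)}}] equals E[e^{s₁ X^{(1)} + s₂ X^{(2)}}]·E[e^{−s₁ W^{(1)} − s₂ W^{(2)}}] plus the three boundary correction terms: E[e^{−s₁(W^{(1)}−X^{(1)})}(1 − e^{−s₂(W^{(2)}−X^{(2)})}) 1_{W^{(1)}>X^{(1)}, W^{(2)}≤X^{(2)}}] + E[e^{−s₂(W^{(2)}−X^{(2)})}(1 − e^{−s₁(W^{(1)}−X^{(1)})}) 1_{W^{(1)}≤X^{(1)}, W^{(2)}>X^{(2)}}] + E[(1 − e^{−s₁(W^{(1)}−X^{(1)}) − s₂(W^{(2)}−X^{(2)})}) 1_{W^{(1)}≤X^{(1)}, W^{(2)}≤X^{(2)}}]. -/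
/-!
Pointwise, with `d = W - X`, the value `e^{-s₁ (d₁ ⊔ 0) - s₂ (d₂ ⊔ 0)}` is `e^{-s₁ d₁ - s₂ d₂}`
plus a correction supported on the sign pattern of `d`. The main term factors as
`e^{s·X} e^{-s·W}`, whose expectation splits by independence, and `Re s = 0` keeps every term
bounded, hence integrable.
-/

open MeasureTheory ProbabilityTheory

theorem cexp_neg_mul_max_sub_mul_max_eq (s₁ s₂ : ℂ) (d₁ d₂ : ℝ) :
    Complex.exp (-s₁ * ((max d₁ 0 : ℝ) : ℂ) - s₂ * ((max d₂ 0 : ℝ) : ℂ))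
      = Complex.exp (-s₁ * d₁ - s₂ * d₂)
        + (if 0 < d₁ ∧ d₂ ≤ 0 then Complex.exp (-s₁ * d₁) * (1 - Complex.exp (-s₂ * d₂)) else 0)
        + (if d₁ ≤ 0 ∧ 0 < d₂ then Complex.exp (-s₂ * d₂) * (1 - Complex.exp (-s₁ * d₁)) else 0)
        + (if d₁ ≤ 0 ∧ d₂ ≤ 0 then 1 - Complex.exp (-s₁ * d₁ - s₂ * d₂) else 0) := by
  simp only [sub_eq_add_neg (-s₁ * _), Complex.exp_add, ← neg_mul]
  rcases le_or_gt d₁ 0 with h₁ | h₁ <;> rcases le_or_gt d₂ 0 with h₂ | h₂ <;>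
    simp [h₁, h₂, not_lt.mpr, not_le.mpr, le_of_lt] <;> ring

section Integrability

variable {Ω : Type*} [MeasurableSpace Ω] {μ : Measure Ω} [IsFiniteMeasure μ]
  {f g : Ω → ℝ} {s t : ℂ}

theorem integrable_cexp_neg_mul_sub_mul (hf : AEMeasurable f μ) (hg : AEMeasurable g μ)
    (hs : s.re = 0) (ht : t.re = 0) :
    Integrable (fun ω => Complex.exp (-s * f ω - t * g ω)) μ :=
  .of_bound (by fun_prop) 1 (ae_of_all _ fun ω => by simp [Complex.norm_exp, hs, ht])

theorem integrable_indicator_cexp_neg_mul_mul_one_sub (hf : AEMeasurable f μ)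
    (hg : AEMeasurable g μ) (hs : s.re = 0) (ht : t.re = 0) {S : Set Ω} (hS : MeasurableSet S) :
    Integrable (S.indicator fun ω => Complex.exp (-s * f ω) * (1 - Complex.exp (-t * g ω))) μ := by
  refine (Integrable.of_bound (by fun_prop) 2 (ae_of_all _ fun ω => ?_)).indicator hS
  grw [norm_mul_le, norm_sub_le]
  simp [Complex.norm_exp, hs, ht]
  norm_num

theorem integrable_indicator_one_sub_cexp_neg_mul_sub_mul (hf : AEMeasurable f μ)
    (hg : AEMeasurable g μ) (hs : s.re = 0) (ht : t.re = 0) {S : Set Ω} (hS : MeasurableSet S) :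
    Integrable (S.indicator fun ω => 1 - Complex.exp (-s * f ω - t * g ω)) μ :=
  ((integrable_const 1).sub (integrable_cexp_neg_mul_sub_mul hf hg hs ht)).indicator hS

end Integrability

theorem stmt_13_general {Ω : Type*} [MeasurableSpace Ω] (μ : Measure Ω) [IsProbabilityMeasure μ]
    (W X : Ω → ℝ × ℝ) (hWmeas : Measurable W) (hXmeas : Measurable X)
    (hindep : IndepFun W X μ)
    (s₁ s₂ : ℂ) (hs₁ : s₁.re = 0) (hs₂ : s₂.re = 0)
    (W' : Ω → ℝ × ℝ) (hW' : ∀ ω, W' ω = (W ω - X ω) ⊔ 0) :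
    (∫ ω, Complex.exp (-s₁ * ((W' ω).1 : ℂ) - s₂ * ((W' ω).2 : ℂ)) ∂μ)
      = (∫ ω, Complex.exp (s₁ * ((X ω).1 : ℂ) + s₂ * ((X ω).2 : ℂ)) ∂μ)
          * (∫ ω, Complex.exp (-s₁ * ((W ω).1 : ℂ) - s₂ * ((W ω).2 : ℂ)) ∂μ)
        + (∫ ω, Set.indicator {ω | (X ω).1 < (W ω).1 ∧ (W ω).2 ≤ (X ω).2}
            (fun ω => Complex.exp (-s₁ * (((W ω).1 - (X ω).1 : ℝ) : ℂ))
              * (1 - Complex.exp (-s₂ * (((W ω).2 - (X ω).2 : ℝ) : ℂ)))) ω ∂μ)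
        + (∫ ω, Set.indicator {ω | (W ω).1 ≤ (X ω).1 ∧ (X ω).2 < (W ω).2}
            (fun ω => Complex.exp (-s₂ * (((W ω).2 - (X ω).2 : ℝ) : ℂ))
              * (1 - Complex.exp (-s₁ * (((W ω).1 - (X ω).1 : ℝ) : ℂ)))) ω ∂μ)
        + (∫ ω, Set.indicator {ω | (W ω).1 ≤ (X ω).1 ∧ (W ω).2 ≤ (X ω).2}
            (fun ω => 1 - Complex.exp (-s₁ * (((W ω).1 - (X ω).1 : ℝ) : ℂ)
              - s₂ * (((W ω).2 - (X ω).2 : ℝ) : ℂ))) ω ∂μ) := by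
  have hprod : (∫ ω, Complex.exp (s₁ * ((X ω).1 : ℂ) + s₂ * ((X ω).2 : ℂ)) ∂μ)
        * (∫ ω, Complex.exp (-s₁ * ((W ω).1 : ℂ) - s₂ * ((W ω).2 : ℂ)) ∂μ)
      = ∫ ω, Complex.exp (-s₁ * (((W ω).1 - (X ω).1 : ℝ) : ℂ)
          - s₂ * (((W ω).2 - (X ω).2 : ℝ) : ℂ)) ∂μ := by
    rw [← hindep.symm.integral_fun_comp_mul_comp hXmeas.aemeasurable hWmeas.aemeasurable
      (f := fun x : ℝ × ℝ => Complex.exp (s₁ * (x.1 : ℂ) + s₂ * (x.2 : ℂ)))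
      (g := fun w : ℝ × ℝ => Complex.exp (-s₁ * (w.1 : ℂ) - s₂ * (w.2 : ℂ)))
      (by fun_prop) (by fun_prop)]
    congr with ω
    rw [← Complex.exp_add]
    push_cast
    ring_nf
  have hd₁ : AEMeasurable (fun ω => (W ω).1 - (X ω).1) μ := by fun_prop
  have hd₂ : AEMeasurable (fun ω => (W ω).2 - (X ω).2) μ := by fun_prop
  have hI₀ := integrable_cexp_neg_mul_sub_mul hd₁ hd₂ hs₁ hs₂
  have hI₁ := integrable_indicator_cexp_neg_mul_mul_one_sub hd₁ hd₂ hs₁ hs₂ (μ := μ)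
    (S := {ω | (X ω).1 < (W ω).1 ∧ (W ω).2 ≤ (X ω).2}) (by measurability)
  have hI₂ := integrable_indicator_cexp_neg_mul_mul_one_sub hd₂ hd₁ hs₂ hs₁ (μ := μ)
    (S := {ω | (W ω).1 ≤ (X ω).1 ∧ (X ω).2 < (W ω).2}) (by measurability)
  have hI₃ := integrable_indicator_one_sub_cexp_neg_mul_sub_mul hd₁ hd₂ hs₁ hs₂ (μ := μ)
    (S := {ω | (W ω).1 ≤ (X ω).1 ∧ (W ω).2 ≤ (X ω).2}) (by measurability)
  rw [hprod, ← integral_add' hI₀ hI₁, ← integral_add' (hI₀.add hI₁) hI₂,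
    ← integral_add' ((hI₀.add hI₁).add hI₂) hI₃]
  congr with ω
  simp only [hW', Prod.fst_sup, Prod.snd_sup, Prod.fst_sub, Prod.snd_sub, Prod.fst_zero,
    Prod.snd_zero, Pi.add_apply, Set.indicator_apply, Set.mem_ofPred_eq]
  simpa only [sub_pos, sub_nonpos] using
    cexp_neg_mul_max_sub_mul_max_eq s₁ s₂ ((W ω).1 - (X ω).1) ((W ω).2 - (X ω).2)

/-- One step of the Lindley recursion in transforms: if `W ≥ 0` a.s. and `X` are
independent `ℝ²`-valued random vectors, `W' = (W − X) ⊔ 0` componentwise, and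
`Re s₁ = Re s₂ = 0`, then `E e^{−s₁W'¹−s₂W'²}` equals
`E e^{s₁X¹+s₂X²} · E e^{−s₁W¹−s₂W²}` plus the three boundary correction terms. -/
theorem stmt_13 {Ω : Type*} [MeasurableSpace Ω] (μ : Measure Ω) [IsProbabilityMeasure μ]
    (W X : Ω → ℝ × ℝ) (hWmeas : Measurable W) (hXmeas : Measurable X)
    (hWpos : ∀ᵐ ω ∂μ, 0 ≤ W ω)
    (hindep : IndepFun W X μ)
    (s₁ s₂ : ℂ) (hs₁ : s₁.re = 0) (hs₂ : s₂.re = 0)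
    (W' : Ω → ℝ × ℝ) (hW' : ∀ ω, W' ω = (W ω - X ω) ⊔ 0) :
    (∫ ω, Complex.exp (-s₁ * ((W' ω).1 : ℂ) - s₂ * ((W' ω).2 : ℂ)) ∂μ)
      = (∫ ω, Complex.exp (s₁ * ((X ω).1 : ℂ) + s₂ * ((X ω).2 : ℂ)) ∂μ)
          * (∫ ω, Complex.exp (-s₁ * ((W ω).1 : ℂ) - s₂ * ((W ω).2 : ℂ)) ∂μ)
        + (∫ ω, Set.indicator {ω | (X ω).1 < (W ω).1 ∧ (W ω).2 ≤ (X ω).2}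
            (fun ω => Complex.exp (-s₁ * (((W ω).1 - (X ω).1 : ℝ) : ℂ))
              * (1 - Complex.exp (-s₂ * (((W ω).2 - (X ω).2 : ℝ) : ℂ)))) ω ∂μ)
        + (∫ ω, Set.indicator {ω | (W ω).1 ≤ (X ω).1 ∧ (X ω).2 < (W ω).2}
            (fun ω => Complex.exp (-s₂ * (((W ω).2 - (X ω).2 : ℝ) : ℂ))
              * (1 - Complex.exp (-s₁ * (((W ω).1 - (X ω).1 : ℝ) : ℂ)))) ω ∂μ)
        + (∫ ω, Set.indicator {ω | (W ω).1 ≤ (X ω).1 ∧ (W ω).2 ≤ (X ω).2}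
            (fun ω => 1 - Complex.exp (-s₁ * (((W ω).1 - (X ω).1 : ℝ) : ℂ)
              - s₂ * (((W ω).2 - (X ω).2 : ℝ) : ℂ))) ω ∂μ) :=
  stmt_13_general μ W X hWmeas hXmeas hindep s₁ s₂ hs₁ hs₂ W' hW'
end
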